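/- Let c be a job-scheduling instance with m machines and n jobs and let B be any allocation, with bundles B_k := {j : B j = k} for k ∈ Fin m. Then there exists k ∈ Fin m such that the cyclically shifted assignment giving machine i the bundle B_{(m − i + k) mod m} is mean-efficient, i.e., Σ_{i ∈ Fin m} c_i(B_{(m − i + k) mod m}) ≤ (1/m)·Σ_{i ∈ Fin m} c_i([n]). -/

import Mathlib

/-!
For a fixed machine `i`, as `k` runs over `ℤ/m` the shifted bundle index `k - i` runs over every
bundle exactly once, so summing the cost of the `k`-th shift over all `k` gives
`∑ᵢ cᵢ([n])`. Some shift therefore costs at most the average `(1/m) ∑ᵢ cᵢ([n])`.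
-/

open Finset

noncomputable section

/-- The cost to machine `i` of the bundle of jobs assigned to machine `k` under allocation `A`. -/
def bundleCost {m n : ℕ} (c : Fin m → Fin n → ℝ) (A : Fin n → Fin m) (i k : Fin m) : ℝ :=
  ∑ j ∈ Finset.univ.filter (fun j => A j = k), c i j

/-- The total cost to machine `i` of all jobs, `c_i([n])`. -/
def rowSum {m n : ℕ} (c : Fin m → Fin n → ℝ) (i : Fin m) : ℝ :=
  ∑ j, c i j

theorem sum_bundleCost_eq_rowSum {m n : ℕ} (c : Fin m → Fin n → ℝ) (A : Fin n → Fin m)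
    (i : Fin m) : ∑ k, bundleCost c A i k = rowSum c i :=
  Finset.sum_fiberwise univ A (c i)

theorem sum_sum_apply_sub_eq_sum_sum {G : Type*} [AddGroup G] [Fintype G] (f : G → G → ℝ) :
    ∑ k, ∑ i, f i (k - i) = ∑ i, ∑ l, f i l := by
  rw [Finset.sum_comm]
  exact Finset.sum_congr rfl fun i _ => Equiv.sum_comp (Equiv.subRight i) (f i)

theorem exists_sum_sub_le_average {G : Type*} [AddGroup G] [Fintype G] [Nonempty G]
    (f : G → G → ℝ) :
    ∃ k, ∑ i, f i (k - i) ≤ (1 / (Fintype.card G : ℝ)) * ∑ i, ∑ l, f i l := by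
  have hsum : ∑ k, ∑ i, f i (k - i) ≤ ∑ _k : G, 1 / (Fintype.card G : ℝ) * ∑ i, ∑ l, f i l := by
    rw [sum_sum_apply_sub_eq_sum_sum, sum_const, card_univ, nsmul_eq_mul, ← mul_assoc,
      mul_one_div_cancel (by positivity), one_mul]
  obtain ⟨k, -, hk⟩ := Finset.exists_le_of_sum_le univ_nonempty hsum
  exact ⟨k, hk⟩

/-- Some cyclic (anti-diagonal) shift of the bundles of any allocation is mean-efficient. -/
theorem stmt_2 {m n : ℕ} (hm : 2 ≤ m)
    (c : Fin m → Fin n → ℝ) (B : Fin n → Fin m) :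
    ∃ k : Fin m,
      ∑ i : Fin m, bundleCost c B i ⟨(m - (i : ℕ) + (k : ℕ)) % m, Nat.mod_lt _ (by omega)⟩
        ≤ (1 / (m : ℝ)) * ∑ i : Fin m, rowSum c i := by
  have : NeZero m := ⟨by omega⟩
  obtain ⟨k, hk⟩ := exists_sum_sub_le_average (bundleCost c B)
  rw [Fintype.card_fin] at hk
  simp only [sum_bundleCost_eq_rowSum] at hk
  -- `Fin.sub` is defined by `k - i = ⟨(m - i + k) % m, _⟩`.
  exact ⟨k, hk⟩
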